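/- arXiv:1812.05079 — 9 statements merged into one kernel-verified Lean document; each statement's English description precedes it below -/
import Mathlib

section
/- Let k be a field and let S = k[X,Y,Z] be the polynomial ring in three variables over k. Let R = k + X·S be the subring of S consisting of all polynomials p such that the evaluation of p at X = 0 is a constant (i.e. lies in k). Then R is integrally closed in its field of fractions. -/
/-- For an ideal `Q` of a commutative `k`-algebra `S`, the subalgebra `k + Q` of `S`,
consisting of all elements of the form `c • 1 + q` with `c ∈ k`, `q ∈ Q`. -/
def kPlus (k : Type*) {S : Type*} [CommRing k] [CommRing S] [Algebra k S]
    (Q : Ideal S) : Subalgebra k S where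
  carrier := {s : S | ∃ c : k, s - algebraMap k S c ∈ Q}
  add_mem' := by
    rintro a b ⟨c, hc⟩ ⟨d, hd⟩
    exact ⟨c + d, by rw [map_add]; convert Q.add_mem hc hd using 1; ring⟩
  mul_mem' := by
    rintro a b ⟨c, hc⟩ ⟨d, hd⟩
    refine ⟨c * d, ?_⟩
    have : a * b - algebraMap k S (c * d)
        = a * (b - algebraMap k S d) + algebraMap k S d * (a - algebraMap k S c) := by
      rw [map_mul]; ring
    rw [this]
    exact Q.add_mem (Q.mul_mem_left _ hd) (Q.mul_mem_left _ hc)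
  algebraMap_mem' := fun c => ⟨c, by simp⟩

/-- Evaluation of the first variable at `0`, as a `k`-algebra homomorphism
`k[X,Y,Z] → k[Y,Z]`. -/
noncomputable def psiAux (k : Type*) [CommSemiring k] :
    MvPolynomial (Fin 3) k →ₐ[k] MvPolynomial (Fin 2) k :=
  ((Polynomial.aeval (0 : MvPolynomial (Fin 2) k)).restrictScalars k).comp
    (MvPolynomial.finSuccEquiv k 2).toAlgHom

open MvPolynomial in
lemma psiAux_apply (k : Type*) [CommSemiring k] (p : MvPolynomial (Fin 3) k) :
    psiAux k p = (finSuccEquiv k 2 p).coeff 0 := by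
  simp [psiAux, Polynomial.coeff_zero_eq_eval_zero, Polynomial.aeval_def, Polynomial.eval,
    Polynomial.eval₂_def]

open MvPolynomial in
lemma mem_span_X0_iff (k : Type*) [CommRing k] (t : MvPolynomial (Fin 3) k) :
    t ∈ Ideal.span {(X 0 : MvPolynomial (Fin 3) k)} ↔ psiAux k t = 0 := by
  rw [Ideal.mem_span_singleton]
  constructor
  · rintro ⟨w, rfl⟩
    have h0 : psiAux k (X 0) = 0 := by
      rw [psiAux_apply, finSuccEquiv_X_zero, Polynomial.coeff_X_zero]
    rw [map_mul, h0, zero_mul]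
  · intro h
    have hdvd : (Polynomial.X : Polynomial (MvPolynomial (Fin 2) k)) ∣ finSuccEquiv k 2 t :=
      Polynomial.X_dvd_iff.mpr (by rw [← psiAux_apply, h])
    obtain ⟨w, hw⟩ := hdvd
    refine ⟨(finSuccEquiv k 2).symm w, (finSuccEquiv k 2).injective ?_⟩
    rw [map_mul, finSuccEquiv_X_zero, AlgEquiv.apply_symm_apply, hw]

open MvPolynomial in
lemma isUnit_step {D : Type*} [CommRing D] [IsDomain D] {n : ℕ}
    {u : MvPolynomial (Fin (n+1)) D} (h : IsUnit u) :
    ∃ v : MvPolynomial (Fin n) D, IsUnit v ∧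
      u = (finSuccEquiv D n).symm (Polynomial.C v) := by
  obtain ⟨r, hr, hCr⟩ := Polynomial.isUnit_iff.mp (h.map (finSuccEquiv D n))
  exact ⟨r, hr, by rw [hCr, AlgEquiv.symm_apply_apply]⟩

open MvPolynomial in
lemma isUnit_fin2_eq_C {k : Type*} [Field k] {u : MvPolynomial (Fin 2) k} (h : IsUnit u) :
    ∃ c : k, u = C c := by
  obtain ⟨v, hv, rfl⟩ := isUnit_step h
  obtain ⟨w, hw, rfl⟩ := isUnit_step hv
  refine ⟨coeff 0 w, ?_⟩
  have h0 := RingHom.congr_fun (finSuccEquiv_comp_C_eq_C (R := k) 0) (coeff 0 w)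
  have h1 := RingHom.congr_fun (finSuccEquiv_comp_C_eq_C (R := k) 1) (coeff 0 w)
  simp only [RingHom.comp_apply, RingHom.coe_coe] at h0 h1
  rw [w.eq_C_of_isEmpty, h0, h1]
  simp

open MvPolynomial in
lemma isIntegral_fin2_eq_C {k : Type*} [Field k] {u : MvPolynomial (Fin 2) k}
    (h : IsIntegral k u) : ∃ c : k, u = C c := by
  rcases eq_or_ne u 0 with rfl | hu
  · exact ⟨0, by simp⟩
  refine isUnit_fin2_eq_C ?_
  obtain ⟨r, hr, hdvd⟩ := h.isAlgebraic.exists_nonzero_dvd (mem_nonZeroDivisors_of_ne_zero hu)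
  exact isUnit_of_dvd_unit hdvd ((isUnit_iff_ne_zero.mpr hr).map (algebraMap k _))

open MvPolynomial in
/-- Key step: any element of `k[X,Y,Z]` that is integral over `k + X·k[X,Y,Z]` lies in it. -/
lemma key_step (k : Type*) [Field k] (s : MvPolynomial (Fin 3) k)
    (hs : IsIntegral ↥(kPlus k (Ideal.span {(X 0 : MvPolynomial (Fin 3) k)})) s) :
    s ∈ kPlus k (Ideal.span {(X 0 : MvPolynomial (Fin 3) k)}) := by
  set R := kPlus k (Ideal.span {(X 0 : MvPolynomial (Fin 3) k)}) with hR
  set χ : ↥R →+* k :=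
    (constantCoeff (R := k)).comp ((psiAux k).toRingHom.comp (algebraMap ↥R _)) with hχ
  have hψr : ∀ r : ↥R, psiAux k (r : MvPolynomial (Fin 3) k) = C (χ r) := by
    rintro ⟨r, c, hc⟩
    have h1 : psiAux k (r - algebraMap k _ c) = 0 := (mem_span_X0_iff k _).mp hc
    rw [map_sub, sub_eq_zero, AlgHom.commutes] at h1
    have h2 : (algebraMap ↥R (MvPolynomial (Fin 3) k)) ⟨r, c, hc⟩ = r := rfl
    simp [hχ, h2, h1, algebraMap_eq]
  obtain ⟨p, pm, hp⟩ := hs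
  have hint : IsIntegral k (psiAux k s) := by
    refine ⟨p.map χ, pm.map χ, ?_⟩
    set Ψ : MvPolynomial (Fin 3) k →+* MvPolynomial (Fin 2) k := (psiAux k).toRingHom with hΨ
    have hcomp : (algebraMap k (MvPolynomial (Fin 2) k)).comp χ
        = Ψ.comp (algebraMap ↥R (MvPolynomial (Fin 3) k)) := by
      refine RingHom.ext fun r => ?_
      have h2 : (algebraMap ↥R (MvPolynomial (Fin 3) k)) r = (r : MvPolynomial (Fin 3) k) := rfl
      simp only [RingHom.comp_apply, h2, hΨ, AlgHom.toRingHom_eq_coe, RingHom.coe_coe]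
      rw [algebraMap_eq, hψr r]
    have hgoal : Polynomial.eval₂ (algebraMap k (MvPolynomial (Fin 2) k)) (Ψ s) (p.map χ) = 0 := by
      rw [Polynomial.eval₂_map, hcomp, ← Polynomial.hom_eval₂, hp, map_zero]
    exact hgoal
  obtain ⟨c, hc⟩ := isIntegral_fin2_eq_C hint
  refine ⟨c, (mem_span_X0_iff k _).mpr ?_⟩
  rw [map_sub, hc, AlgHom.commutes, algebraMap_eq, sub_self]

set_option synthInstance.maxHeartbeats 1000000 in
open MvPolynomial in
/-- Let `k` be a field, `S = k[X,Y,Z]`, and `R = k + X·S` the subring of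
polynomials whose evaluation at `X = 0` is a constant. Then `R` is integrally closed in its
field of fractions. -/
theorem kPlus_xSpan_isIntegrallyClosed (k : Type*) [Field k] :
    IsIntegrallyClosed
      ↥(kPlus k (Ideal.span {(X 0 : MvPolynomial (Fin 3) k)})) := by
  let S := MvPolynomial (Fin 3) k
  let R := kPlus k (Ideal.span {(X 0 : S)})
  let K := FractionRing S
  have hinj : Function.Injective (algebraMap ↥R K) := by
    intro a b hab
    have hab' : algebraMap S K (algebraMap ↥R S a) = algebraMap S K (algebraMap ↥R S b) := by
      rwa [← IsScalarTower.algebraMap_apply, ← IsScalarTower.algebraMap_apply]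
    exact Subtype.ext (IsFractionRing.injective S K hab')
  haveI : IsFractionRing ↥R K := by
    constructor
    constructor
    · rintro ⟨r, hr⟩
      refine IsUnit.mk0 _ ?_
      rw [Ne, ← map_zero (algebraMap ↥R K)]
      exact fun h => nonZeroDivisors.ne_zero hr (hinj h)
    · intro z
      obtain ⟨⟨p, q, hq⟩, hz⟩ := IsLocalization.surj (nonZeroDivisors S) z
      have hq0 : (q : S) ≠ 0 := nonZeroDivisors.ne_zero hq
      have hXq : (X 0 : S) * q ∈ R := ⟨0, by simpa using Ideal.mem_span_singleton.mpr ⟨q, rfl⟩⟩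
      have hXp : (X 0 : S) * p ∈ R := ⟨0, by simpa using Ideal.mem_span_singleton.mpr ⟨p, rfl⟩⟩
      have hXq0 : (⟨(X 0 : S) * q, hXq⟩ : ↥R) ∈ nonZeroDivisors ↥R := by
        refine mem_nonZeroDivisors_of_ne_zero ?_
        simp only [ne_eq, Subtype.ext_iff]
        exact mul_ne_zero (MvPolynomial.X_ne_zero 0) hq0
      refine ⟨⟨⟨(X 0 : S) * p, hXp⟩, ⟨_, hXq0⟩⟩, ?_⟩
      show z * algebraMap ↥R K _ = algebraMap ↥R K _
      rw [IsScalarTower.algebraMap_apply ↥R S K, IsScalarTower.algebraMap_apply ↥R S K]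
      show z * algebraMap S K ((X 0 : S) * q) = algebraMap S K ((X 0 : S) * p)
      rw [map_mul, map_mul, ← mul_assoc, mul_comm z, mul_assoc, hz]
    · intro x y h
      exact ⟨1, by rw [hinj h]⟩
  rw [isIntegrallyClosed_iff K]
  intro x hx
  have hxS : IsIntegral S x := hx.tower_top
  obtain ⟨s, hs⟩ := IsIntegrallyClosed.isIntegral_iff.mp hxS
  have hsR : IsIntegral ↥R s :=
    IsIntegral.tower_bot (IsFractionRing.injective S K) (by rwa [hs])
  exact ⟨⟨s, key_step k s hsR⟩, by rw [IsScalarTower.algebraMap_apply ↥R S K]; exact hs⟩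
end

section
/- Let k be a field and let S = k[X,Y,Z] be the polynomial ring in three variables over k. Then the subring R = k + X·S of S is not a Noetherian ring. -/
set_option maxHeartbeats 1000000 in
set_option synthInstance.maxHeartbeats 400000 in
open MvPolynomial in
/-- Let `k` be a field and `S = k[X,Y,Z]`. Then the subring
`R = k + X·S` of `S` is not Noetherian. -/
theorem kPlus_xSpan_not_noetherian (k : Type*) [Field k] :
    ¬ IsNoetherianRing
      ↥(kPlus k (Ideal.span {(X 0 : MvPolynomial (Fin 3) k)})) := by
  classical
  set S := MvPolynomial (Fin 3) k
  set Q : Ideal S := Ideal.span {(X 0 : S)} with hQ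
  set R := kPlus k Q with hRdef
  intro hN
  have hxy : ∀ i : ℕ, (X 0 * X 1 ^ i : S) ∈ R := fun i =>
    ⟨0, by
      rw [map_zero, sub_zero]
      exact Ideal.mem_span_singleton.mpr (dvd_mul_right _ _)⟩
  set xy : ℕ → R := fun i => ⟨X 0 * X 1 ^ i, hxy i⟩ with hxydef
  set f : ℕ →o Ideal R :=
    ⟨fun n => Ideal.span (Set.range fun i : Fin n => xy i), by
      intro n m hnm
      apply Ideal.span_mono
      rintro _ ⟨i, rfl⟩
      exact ⟨⟨i, lt_of_lt_of_le i.2 hnm⟩, rfl⟩⟩ with hf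
  have key : ∀ n : ℕ, xy n ∉ f n := by
    intro n h
    rw [hf] at h
    change xy n ∈ Ideal.span (Set.range fun i : Fin n => xy i) at h
    rw [← Ideal.submodule_span_eq, Submodule.mem_span_range_iff_exists_fun] at h
    obtain ⟨c, hc⟩ := h
    have hc' : ∑ i : Fin n, (c i : S) * (X 0 * X 1 ^ (i : ℕ)) = X 0 * X 1 ^ n := by
      have := congrArg (Subtype.val) hc
      simpa using this
    set m : Fin 3 →₀ ℕ := Finsupp.single 0 1 + Finsupp.single 1 n with hm
    have hmono : ∀ j : ℕ, (X 0 * X 1 ^ j : S)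
        = monomial (Finsupp.single 0 1 + Finsupp.single 1 j) 1 := by
      intro j
      rw [X_pow_eq_monomial, X, monomial_mul, one_mul]
    have hcoeff := congrArg (coeff m) hc'
    rw [coeff_sum] at hcoeff
    have rhs : coeff m (X 0 * X 1 ^ n : S) = 1 := by
      rw [hmono, coeff_monomial, if_pos rfl]
    have lhs : ∀ i : Fin n, coeff m ((c i : S) * (X 0 * X 1 ^ (i : ℕ))) = 0 := by
      intro i
      rw [hmono, coeff_mul_monomial']
      have hle : Finsupp.single 0 1 + Finsupp.single 1 (i : ℕ) ≤ m := by
        rw [hm, Finsupp.le_def]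
        intro a
        simp only [Finsupp.add_apply, Finsupp.single_apply]
        split_ifs <;> omega
      rw [if_pos hle, mul_one]
      have hsub : m - (Finsupp.single 0 1 + Finsupp.single 1 (i : ℕ))
          = Finsupp.single 1 (n - (i : ℕ)) := by
        ext a
        rw [Finsupp.tsub_apply]
        simp only [hm, Finsupp.add_apply, Finsupp.single_apply]
        split_ifs <;> omega
      rw [hsub]
      obtain ⟨d, hd⟩ := (c i).2
      obtain ⟨g, hg⟩ := Ideal.mem_span_singleton.mp hd
      have hci : (c i : S) = C d + X 0 * g := by
        have h2 : (c i : S) - algebraMap k S d = X 0 * g := hg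
        rw [← h2, algebraMap_eq]; ring
      rw [hci, coeff_add, coeff_C, coeff_X_mul']
      have h0 : ¬ (0 : Fin 3) ∈ (Finsupp.single (1 : Fin 3) (n - (i : ℕ))).support := by
        simp [Finsupp.single_apply]
      rw [if_neg h0, add_zero, if_neg]
      intro habs
      have h3 : n - (i : ℕ) = 0 := Finsupp.single_eq_zero.mp habs.symm
      have h4 : (i : ℕ) < n := i.2
      omega
    rw [Finset.sum_congr rfl (fun i _ => lhs i), Finset.sum_const_zero, rhs] at hcoeff
    exact one_ne_zero hcoeff.symm
  obtain ⟨n, hn⟩ := monotone_stabilizes_iff_noetherian.mpr (isNoetherianRing_iff.mp hN) f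
  apply key n
  rw [hn (n + 1) (Nat.le_succ n)]
  exact Ideal.subset_span ⟨Fin.last n, rfl⟩
end

section
/- Let k be a field, let S = k[X,Y,Z] be the polynomial ring in three variables over k, and let R = k + X·S be the subring of S consisting of polynomials whose evaluation at X = 0 is a constant. Then the sequence XY, XZ is not a regular sequence on R. (For instance, X·Y² ∉ (XY)R but XZ·(X·Y²) ∈ (XY)R, so XZ is a zerodivisor on R/(XY)R.) -/
open MvPolynomial in
/-- `Y ∉ k + X·S`: for no constant `c` does `X` divide `Y - c`. -/
lemma aux1 (k : Type*) [Field k] (c : k) :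
    ¬ (X 1 - algebraMap k (MvPolynomial (Fin 3) k) c ∈ Ideal.span {(X 0 : MvPolynomial (Fin 3) k)}) := by
  rw [Ideal.mem_span_singleton]
  rintro ⟨q, hq⟩
  have h := congrArg
    (aeval (fun i : Fin 3 => if i = 0 then 0 else X i : Fin 3 → MvPolynomial (Fin 3) k)) hq
  simp [algebraMap_eq, sub_eq_zero] at h
  have h2 := congrArg (coeff (Finsupp.single 1 1)) h
  rw [MvPolynomial.coeff_X, coeff_C, if_neg (show ¬ ((0 : Fin 3 →₀ ℕ) = Finsupp.single 1 1) by simp [eq_comm, Finsupp.single_eq_zero])] at h2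
  rw [if_pos rfl] at h2
  exact one_ne_zero h2

set_option synthInstance.maxHeartbeats 1000000 in
set_option maxHeartbeats 2000000 in
open Pointwise in
open MvPolynomial in
/-- Let `k` be a field, `S = k[X,Y,Z]`, and `R = k + X·S` the subring of
polynomials whose evaluation at `X = 0` is a constant. Then `XY, XZ` is not a regular
sequence on `R`. -/
theorem kPlus_xSpan_XY_XZ_not_regularSequence (k : Type*) [Field k] :
    ¬ RingTheory.Sequence.IsRegular
        ↥(kPlus k (Ideal.span {(X 0 : MvPolynomial (Fin 3) k)}))
        [(⟨X 0 * X 1, 0, by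
            simpa using Ideal.mem_span_singleton.mpr (dvd_mul_right (X 0) (X 1))⟩ :
          ↥(kPlus k (Ideal.span {(X 0 : MvPolynomial (Fin 3) k)}))),
         (⟨X 0 * X 2, 0, by
            simpa using Ideal.mem_span_singleton.mpr (dvd_mul_right (X 0) (X 2))⟩ :
          ↥(kPlus k (Ideal.span {(X 0 : MvPolynomial (Fin 3) k)})))] := by
  intro hreg
  set R := ↥(kPlus k (Ideal.span {(X 0 : MvPolynomial (Fin 3) k)})) with hR
  set a : R := ⟨X 0 * X 1, 0, by
      simpa using Ideal.mem_span_singleton.mpr (dvd_mul_right (X 0) (X 1))⟩ with ha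
  set b : R := ⟨X 0 * X 2, 0, by
      simpa using Ideal.mem_span_singleton.mpr (dvd_mul_right (X 0) (X 2))⟩ with hb
  have hw := hreg.toIsWeaklyRegular
  rw [RingTheory.Sequence.isWeaklyRegular_cons_iff] at hw
  obtain ⟨-, hw2⟩ := hw
  rw [RingTheory.Sequence.isWeaklyRegular_cons_iff] at hw2
  obtain ⟨hbreg, -⟩ := hw2
  -- the witnesses: x = X·Y², m = X·Y·Z
  set x : R := ⟨X 0 * X 1 ^ 2, 0, by
      simpa using Ideal.mem_span_singleton.mpr (dvd_mul_right (X 0) (X 1 ^ 2))⟩ with hx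
  set m : R := ⟨X 0 * X 1 * X 2, 0, by
      simpa using Ideal.mem_span_singleton.mpr
        (Dvd.dvd.mul_right (dvd_mul_right (X 0) (X 1)) (X 2))⟩ with hm
  have key : b * x = a * m := by
    apply Subtype.ext
    show (X 0 * X 2) * (X 0 * X 1 ^ 2) = (X 0 * X 1) * (X 0 * X 1 * X 2)
    ring
  -- in `QuotSMulTop a R`, `b • mk x = 0`
  have hmem : b * x ∈ a • (⊤ : Submodule R R) := by
    rw [key]
    exact Submodule.smul_mem_pointwise_smul m a ⊤ trivial
  have hzero : b • (Submodule.Quotient.mk x : QuotSMulTop a R) = 0 := by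
    rw [← Submodule.Quotient.mk_smul, Submodule.Quotient.mk_eq_zero]
    exact hmem
  have : (Submodule.Quotient.mk x : QuotSMulTop a R) = 0 := by
    apply hbreg
    show b • _ = b • _
    rw [hzero, smul_zero]
  rw [Submodule.Quotient.mk_eq_zero] at this
  -- so `x ∈ a • ⊤`, i.e. `∃ r, a * r = x`
  obtain ⟨r, -, hr⟩ := Set.mem_smul_set.mp this
  have hval : (X 0 * X 1) * (r : MvPolynomial (Fin 3) k) = X 0 * X 1 ^ 2 := by
    have := congrArg Subtype.val hr
    exact this
  have hrY : (r : MvPolynomial (Fin 3) k) = X 1 := by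
    have hXY : (X 0 * X 1 : MvPolynomial (Fin 3) k) ≠ 0 := by
      apply mul_ne_zero <;> exact X_ne_zero _
    apply mul_left_cancel₀ hXY
    rw [hval]; ring
  obtain ⟨c, hc⟩ := r.2
  rw [hrY] at hc
  exact aux1 k c hc
end

section
/- Let k be a field, let S be an integral domain that is essentially of finite type over k, and let f, g, h be a regular sequence on S. Set R = k + fS. Then the sequence fg, fh is not a regular sequence on R. -/
open scoped Pointwise

theorem Submodule.mem_smul_top_iff_dvd {R : Type*} [CommRing R] {r x : R} :
    x ∈ r • (⊤ : Submodule R R) ↔ r ∣ x := by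
  rw [← Submodule.ideal_span_singleton_smul, smul_eq_mul, Ideal.mul_top,
    Ideal.mem_span_singleton]

theorem notMem_span_singleton_of_isSMulRegular_quotSMulTop {R : Type*} [CommRing R] {r s : R}
    (hs : IsSMulRegular (QuotSMulTop r R) s) [Nontrivial (QuotSMulTop r R)] :
    s ∉ Ideal.span {r} := by
  intro hrs
  have hone : (1 : R) ∈ r • (⊤ : Submodule R R) :=
    mem_of_isSMulRegular_quotient_of_smul_mem hs
      (by simpa [Submodule.mem_smul_top_iff_dvd, Ideal.mem_span_singleton] using hrs)
  have htop : r • (⊤ : Submodule R R) = ⊤ := (Ideal.eq_top_iff_one _).mpr hone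
  exact not_subsingleton (QuotSMulTop r R) (Submodule.Quotient.subsingleton_iff.mpr htop)

theorem RingTheory.Sequence.IsRegular.ofList_ne_top {R : Type*} [CommRing R] {rs : List R}
    (h : RingTheory.Sequence.IsRegular R rs) : Ideal.ofList rs ≠ ⊤ := by
  intro htop
  exact h.top_ne_smul (by rw [htop, Submodule.top_smul])

theorem mem_kPlus_of_mem (k : Type*) {S : Type*} [CommRing k] [CommRing S] [Algebra k S]
    {Q : Ideal S} {s : S} (hs : s ∈ Q) : s ∈ kPlus k Q :=
  ⟨0, by simpa using hs⟩

theorem notMem_kPlus {k S : Type*} [Field k] [CommRing S] [Algebra k S] {Q : Ideal S} {s : S}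
    (hsQ : s ∉ Q) (hQs : Q ⊔ Ideal.span {s} ≠ ⊤) : s ∉ kPlus k Q := by
  rintro ⟨c, hc⟩
  rcases eq_or_ne c 0 with rfl | hc0
  · exact hsQ (by simpa using hc)
  · have hcmem : algebraMap k S c ∈ Q ⊔ Ideal.span {s} := by
      simpa using sub_mem (Ideal.mem_sup_right (Ideal.mem_span_singleton_self s))
        (Ideal.mem_sup_left hc)
    exact hQs (Ideal.eq_top_of_isUnit_mem _ hcmem ((isUnit_iff_ne_zero.mpr hc0).map _))

theorem Subalgebra.mem_of_isSMulRegular_quotSMulTop {R S : Type*} [CommRing R] [CommRing S]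
    [Algebra R S] {A : Subalgebra R S} {a b : A} (hb : IsSMulRegular (QuotSMulTop a A) b)
    (ha : IsLeftRegular (a : S)) {s : S} (has : ↑a * s ∈ A) (hbs : ↑b * s ∈ A) : s ∈ A := by
  have hcomm : b • (⟨_, has⟩ : A) ∈ a • (⊤ : Submodule A A) := by
    rw [Submodule.mem_smul_top_iff_dvd]
    exact ⟨⟨_, hbs⟩, Subtype.ext (mul_left_comm _ _ _)⟩
  obtain ⟨t, ht⟩ := Submodule.mem_smul_top_iff_dvd.mp
    (mem_of_isSMulRegular_quotient_of_smul_mem hb hcomm)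
  exact ha (congrArg Subtype.val ht) ▸ t.2

/-- Let `k` be a field, `S` a domain essentially of finite type over `k`,
and `f, g, h` a regular sequence on `S`. Set `R = k + fS`. Then `fg, fh` is not a regular
sequence on `R`. -/
theorem kPlus_fSpan_fg_fh_not_regularSequence (k : Type*) [Field k]
    (S : Type*) [CommRing S] [IsDomain S] [Algebra k S]
    (f g h : S) (hreg : RingTheory.Sequence.IsRegular S [f, g, h]) :
    ¬ RingTheory.Sequence.IsRegular ↥(kPlus k (Ideal.span {f}))
        [(⟨f * g, 0, by
            simpa using Ideal.mem_span_singleton.mpr (dvd_mul_right f g)⟩ :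
          ↥(kPlus k (Ideal.span {f}))),
         (⟨f * h, 0, by
            simpa using Ideal.mem_span_singleton.mpr (dvd_mul_right f h)⟩ :
          ↥(kPlus k (Ideal.span {f})))] := by
  open RingTheory.Sequence in
  intro hR
  obtain ⟨hf, hgh⟩ := (isRegular_cons_iff S f [g, h]).mp hreg
  have hg := ((isRegular_cons_iff _ g [h]).mp hgh).1
  have := hgh.nontrivial
  have hgf : g ∉ Ideal.span {f} := notMem_span_singleton_of_isSMulRegular_quotSMulTop hg
  have hfg : Ideal.span {f} ⊔ Ideal.span {g} ≠ ⊤ :=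
    ne_top_of_le_ne_top hreg.ofList_ne_top <| sup_le
      (Ideal.span_singleton_le_iff_mem _ |>.mpr (Ideal.subset_span (by simp)))
      (Ideal.span_singleton_le_iff_mem _ |>.mpr (Ideal.subset_span (by simp)))
  have hg0 : g ≠ 0 := by rintro rfl; exact hgf (Ideal.zero_mem _)
  have hfh := ((isRegular_cons_iff _ _ _).mp ((isRegular_cons_iff _ _ _).mp hR).2).1
  refine notMem_kPlus hgf hfg (Subalgebra.mem_of_isSMulRegular_quotSMulTop hfh ?_ ?_ ?_)
  · exact IsLeftRegular.mul hf (IsRegular.of_ne_zero hg0).left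
  all_goals exact mem_kPlus_of_mem k <|
    Ideal.mul_mem_right _ _ (Ideal.mul_mem_right _ _ (Ideal.mem_span_singleton_self f))
end

section
/- Let k be a field, let S be an integral domain that is essentially of finite type over k, and let Q be an ideal of S with Q ≠ S. Set R = k + Q. Then for every prime ideal 𝔭 of R with 𝔭 ≠ Q, the localization R_𝔭 of R at 𝔭 is a Noetherian ring (indeed R_𝔭 coincides with the localization of S at the corresponding multiplicative set). -/
set_option synthInstance.maxHeartbeats 1000000 in
/-- Let `k` be a field, `S` a domain essentially of finite type over `k`,
`Q ≠ S` an ideal of `S`, and `R = k + Q`.  Then for every prime ideal `𝔭` of `R` with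
`𝔭 ≠ Q`, the localization `R_𝔭` is Noetherian. -/
theorem kPlus_localization_atPrime_noetherian (k : Type*) [Field k]
    (S : Type*) [CommRing S] [IsDomain S] [Algebra k S] [Algebra.EssFiniteType k S]
    (Q : Ideal S) (hQ : Q ≠ ⊤)
    (P : Ideal ↥(kPlus k Q)) [P.IsPrime] (hP : P ≠ Ideal.comap (kPlus k Q).val Q) :
    IsNoetherianRing (Localization.AtPrime P) := by
  classical
  have hSnoeth : IsNoetherianRing S :=
    IsLocalization.isNoetherianRing (Algebra.EssFiniteType.submonoid k S) S
      (Algebra.FiniteType.isNoetherianRing k _)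
  set QR : Ideal ↥(kPlus k Q) := Ideal.comap (kPlus k Q).val Q with hQRdef
  -- QR is maximal
  have hmax : QR.IsMaximal := by
    rw [Ideal.isMaximal_iff]
    constructor
    · intro h
      exact hQ ((Ideal.eq_top_iff_one Q).mpr (by simpa [hQRdef] using h))
    · rintro I x hIQ hxI hxQR
      obtain ⟨c, hc⟩ := x.2
      have hc0 : c ≠ 0 := by
        rintro rfl
        apply hxI
        simpa [hQRdef] using hc
      have h1 : x - algebraMap k ↥(kPlus k Q) c ∈ QR := by
        show ((x - algebraMap k ↥(kPlus k Q) c : ↥(kPlus k Q)) : S) ∈ Q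
        push_cast
        simpa using hc
      have h2 : algebraMap k ↥(kPlus k Q) c ∈ I := by
        have := I.sub_mem hxQR (hIQ h1)
        simpa using this
      have h3 : IsUnit (algebraMap k ↥(kPlus k Q) c) := (isUnit_iff_ne_zero.mpr hc0).map (algebraMap k ↥(kPlus k Q))
      exact (Ideal.eq_top_iff_one I).mp (I.eq_top_of_isUnit_mem h2 h3)
  have hprime : P.IsPrime := inferInstance
  have hnle : ¬ QR ≤ P := by
    intro hle
    exact hP (hmax.eq_of_le hprime.ne_top hle).symm
  obtain ⟨x, hxQR, hxP⟩ := SetLike.not_le_iff_exists.mp hnle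
  have hxQ : (x : S) ∈ Q := hxQR
  have memR : ∀ s : S, ∃ c : k, s * (x : S) - algebraMap k S c ∈ Q :=
    fun s => ⟨0, by simpa using Q.mul_mem_left s hxQ⟩
  set xc : P.primeCompl := ⟨x, hxP⟩ with hxc
  -- the ring hom S → R_P
  set φ : S →+* Localization.AtPrime P :=
    { toFun := fun s => Localization.mk ⟨s * (x : S), memR s⟩ xc
      map_one' := by
        show Localization.mk ⟨1 * (x : S), memR 1⟩ xc = 1
        rw [show (⟨1 * (x : S), memR 1⟩ : ↥(kPlus k Q)) = (xc : ↥(kPlus k Q)) from Subtype.ext (one_mul _)]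
        exact Localization.mk_self xc
      map_mul' := by
        intro s t
        rw [Localization.mk_mul, Localization.mk_eq_mk_iff, Localization.r_iff_exists]
        refine ⟨1, Subtype.ext ?_⟩
        push_cast [Subalgebra.coe_val, MulMemClass.coe_mul, Subalgebra.coe_mul]
        ring
      map_zero' := by
        show Localization.mk ⟨0 * (x : S), memR 0⟩ xc = 0
        rw [show (⟨0 * (x : S), memR 0⟩ : ↥(kPlus k Q)) = 0 from Subtype.ext (zero_mul _)]
        exact Localization.mk_zero xc
      map_add' := by
        intro s t
        show Localization.mk ⟨(s + t) * (x : S), memR (s + t)⟩ xc = _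
        rw [Localization.add_mk_self]
        congr 1
        refine Subtype.ext ?_
        push_cast
        ring } with hφ
  letI : Algebra S (Localization.AtPrime P) := φ.toAlgebra
  set M : Submonoid S := P.primeCompl.map (kPlus k Q).val with hM
  have halg : ∀ s : S, algebraMap S (Localization.AtPrime P) s
      = Localization.mk ⟨s * (x : S), memR s⟩ xc := fun _ => rfl
  haveI : IsLocalization M (Localization.AtPrime P) := by
    constructor
    constructor
    · rintro ⟨_, r, hrP, rfl⟩
      rw [halg]
      refine IsUnit.of_mul_eq_one
        (Localization.mk (x : ↥(kPlus k Q)) ⟨r * x, P.primeCompl.mul_mem hrP hxP⟩) ?_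
      rw [Localization.mk_mul, show (1 : Localization.AtPrime P) = Localization.mk 1 1 from
        Localization.mk_one.symm, Localization.mk_eq_mk_iff, Localization.r_iff_exists]
      refine ⟨1, Subtype.ext ?_⟩
      push_cast [Subalgebra.coe_val, MulMemClass.coe_mul, Subalgebra.coe_mul]
      ring
    · intro z
      refine Localization.induction_on z ?_
      rintro ⟨r, m⟩
      refine ⟨⟨(r : S), ⟨(m : ↥(kPlus k Q)), ⟨m, m.2, rfl⟩⟩⟩, ?_⟩
      simp only [halg]
      rw [Localization.mk_mul, Localization.mk_eq_mk_iff, Localization.r_iff_exists]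
      refine ⟨1, Subtype.ext ?_⟩
      push_cast [Subalgebra.coe_val, MulMemClass.coe_mul, Subalgebra.coe_mul]
      ring
    · intro s t h
      simp only [halg] at h
      rw [Localization.mk_eq_mk_iff, Localization.r_iff_exists] at h
      obtain ⟨c, hc⟩ := h
      have hcs := congrArg (Subtype.val) hc
      push_cast at hcs
      have hx0 : (x : S) ≠ 0 := fun h0 =>
        hxP (by rw [show x = 0 from Subtype.ext h0]; exact P.zero_mem)
      have hc0 : ((c : ↥(kPlus k Q)) : S) ≠ 0 := fun h0 =>
        c.2 (by rw [show (c : ↥(kPlus k Q)) = 0 from Subtype.ext h0]; exact P.zero_mem)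
      have hst : s = t := by
        have h2 : (((c : ↥(kPlus k Q)) : S) * ((x : S) * (x : S))) * s
            = (((c : ↥(kPlus k Q)) : S) * ((x : S) * (x : S))) * t := by linear_combination hcs
        exact mul_left_cancel₀ (mul_ne_zero hc0 (mul_ne_zero hx0 hx0)) h2
      exact ⟨⟨(x : S), ⟨x, hxP, rfl⟩⟩, by rw [hst]⟩
  exact IsLocalization.isNoetherianRing M (Localization.AtPrime P) hSnoeth
end

section
/- Let R ⊆ S be an extension of commutative rings, and let f, g ∈ R be elements such that f·S ⊆ R and g·S ⊆ R. Then the natural map from the cokernel of the Čech map δ_R : R_f ⊕ R_g → R_{fg} to the cokernel of the Čech map δ_S : S_f ⊕ S_g → S_{fg} (induced by the inclusion R ⊆ S and the canonical maps on localizations) is an isomorphism of R-modules; that is, H²_{f,g}(R) ≅ H²_{f,g}(S). -/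
/-!
Because `f` lies in the conductor, a fraction `s / fⁿ` of `S_f` equals `(f s) / fⁿ⁺¹` with
`f s ∈ R`, so `R_f → S_f` is surjective, and likewise `R_g → S_g`; since `f g` also lies in the
conductor and localization preserves injectivity, `R_{fg} → S_{fg}` is bijective. A diagram chase
in the commutative square formed by the two Čech maps then shows that the induced map on
cokernels is bijective.
-/

/-- The canonical localization map `A_u →+* A_{u·v}`. -/
noncomputable def awayLeftMap {A : Type*} [CommRing A] (u v : A) :
    Localization.Away u →+* Localization.Away (u * v) :=
  IsLocalization.Away.awayToAwayRight (P := Localization.Away (u * v)) u v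

/-- The canonical localization map `A_v →+* A_{u·v}`. -/
noncomputable def awayRightMap {A : Type*} [CommRing A] (u v : A) :
    Localization.Away v →+* Localization.Away (u * v) :=
  IsLocalization.Away.awayToAwayLeft (P := Localization.Away (u * v)) v u

/-- The (top) Čech map `δ : A_u ⊕ A_v →+ A_{u·v}`, `(a, b) ↦ ā - b̄`, as an additive map.
Its cokernel is the top Čech cohomology `H²_{u,v}(A)`. -/
noncomputable def cechHom {A : Type*} [CommRing A] (u v : A) :
    Localization.Away u × Localization.Away v →+ Localization.Away (u * v) :=
  ((awayLeftMap u v).toAddMonoidHom.comp (AddMonoidHom.fst _ _)) -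
    ((awayRightMap u v).toAddMonoidHom.comp (AddMonoidHom.snd _ _))

variable {S : Type*} [CommRing S] (R : Subring S)

/-- For `x ∈ R ⊆ S`, the canonical map `R_x →+* S_x`. -/
noncomputable def locMapAway (x : ↥R) : Localization.Away x →+* Localization.Away (x : S) :=
  Localization.awayLift ((algebraMap S (Localization.Away (x : S))).comp R.subtype) x
    (by
    simpa using IsLocalization.Away.algebraMap_isUnit
      (S := Localization.Away (x : S)) (x : S))

/-- The canonical map `R_{fg} →+* S_{fg}` for `f, g ∈ R ⊆ S`. -/
noncomputable def cechCompareMap (f g : ↥R) :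
    Localization.Away (f * g) →+* Localization.Away ((f : S) * (g : S)) :=
  Localization.awayLift
    ((algebraMap S (Localization.Away ((f : S) * (g : S)))).comp R.subtype) (f * g)
    (by
      simpa using IsLocalization.Away.algebraMap_isUnit
        (S := Localization.Away ((f : S) * (g : S))) ((f : S) * (g : S)))

lemma cechCompare_comp_left (f g : ↥R) :
    (cechCompareMap R f g).comp (awayLeftMap f g)
      = (awayLeftMap (f : S) (g : S)).comp (locMapAway R f) := by
  apply IsLocalization.ringHom_ext (Submonoid.powers f)
  ext x
  simp [cechCompareMap, awayLeftMap, locMapAway,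
    IsLocalization.Away.awayToAwayRight_eq, IsLocalization.Away.lift_eq]

lemma cechCompare_comp_right (f g : ↥R) :
    (cechCompareMap R f g).comp (awayRightMap f g)
      = (awayRightMap (f : S) (g : S)).comp (locMapAway R g) := by
  apply IsLocalization.ringHom_ext (Submonoid.powers g)
  ext x
  simp [cechCompareMap, awayRightMap, locMapAway,
    IsLocalization.Away.awayToAwayLeft_eq, IsLocalization.Away.lift_eq]

/-- The natural map `H²_{f,g}(R) → H²_{f,g}(S)` on cokernels of the Čech maps, induced by
the inclusion `R ⊆ S`. -/
noncomputable def cechCokerMap (f g : ↥R) :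
    (Localization.Away (f * g) ⧸ (cechHom f g).range) →+
      (Localization.Away ((f : S) * (g : S)) ⧸ (cechHom (f : S) (g : S)).range) :=
  QuotientAddGroup.map _ _ (cechCompareMap R f g).toAddMonoidHom (by
    rintro x ⟨p, rfl⟩
    refine ⟨(locMapAway R f p.1, locMapAway R g p.2), ?_⟩
    simp only [cechHom, AddMonoidHom.sub_apply, AddMonoidHom.comp_apply,
      AddMonoidHom.coe_fst, AddMonoidHom.coe_snd, RingHom.toAddMonoidHom_eq_coe,
      AddMonoidHom.coe_coe, AddSubgroup.coe_comap, map_sub]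
    conv_rhs => rw [← RingHom.comp_apply, ← RingHom.comp_apply,
      cechCompare_comp_left, cechCompare_comp_right]
    rfl)

theorem QuotientAddGroup.map_bijective_of_comm {A A' B B' : Type*} [AddCommGroup A]
    [AddCommGroup A'] [AddCommGroup B] [AddCommGroup B'] {δ : A →+ B} {δ' : A' →+ B'}
    {α : A → A'} {β : B →+ B'} (hα : Function.Surjective α) (hβ : Function.Bijective β)
    (hcomm : ∀ a, β (δ a) = δ' (α a)) (h : δ.range ≤ δ'.range.comap β) :
    Function.Bijective (QuotientAddGroup.map δ.range δ'.range β h) := by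
  constructor
  · rw [injective_iff_map_eq_zero]
    intro x hx
    induction x using QuotientAddGroup.induction_on with
    | H b =>
      rw [QuotientAddGroup.map_mk, QuotientAddGroup.eq_zero_iff] at hx
      obtain ⟨a', ha'⟩ := hx
      obtain ⟨a, rfl⟩ := hα a'
      rw [QuotientAddGroup.eq_zero_iff]
      exact ⟨a, hβ.1 (by rw [hcomm, ha'])⟩
  · intro y
    induction y using QuotientAddGroup.induction_on with
    | H b' =>
      obtain ⟨b, rfl⟩ := hβ.2 b'
      exact ⟨b, rfl⟩

/-- Instance search does not see through `R.subtype x = ↑x`. -/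
instance isLocalizationAway_subtype (x : ↥R) :
    IsLocalization.Away (R.subtype x) (Localization.Away (x : S)) :=
  inferInstanceAs (IsLocalization.Away (x : S) _)

lemma locMapAway_eq_map (x : ↥R) :
    locMapAway R x = IsLocalization.Away.map (Localization.Away x)
      (Localization.Away (x : S)) R.subtype x := by
  apply IsLocalization.ringHom_ext (Submonoid.powers x)
  ext a
  simp [locMapAway, IsLocalization.Away.map]

lemma locMapAway_injective (x : ↥R) : Function.Injective (locMapAway R x) := by
  rw [locMapAway_eq_map, IsLocalization.Away.map_injective_iff]
  intro a ha
  exact ⟨0, by simpa using ha⟩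

lemma locMapAway_surjective (x : ↥R) (hx : ∀ s : S, (x : S) * s ∈ R) :
    Function.Surjective (locMapAway R x) := by
  rw [locMapAway_eq_map, IsLocalization.Away.map_surjective_iff]
  intro s
  exact ⟨⟨x * s, hx s⟩, 1, by simp⟩

lemma cechCompareMap_eq_locMapAway (f g : ↥R) : cechCompareMap R f g = locMapAway R (f * g) :=
  rfl

lemma cechCompareMap_bijective (f g : ↥R) (hf : ∀ s : S, (f : S) * s ∈ R) :
    Function.Bijective (cechCompareMap R f g) := by
  rw [cechCompareMap_eq_locMapAway]
  refine ⟨locMapAway_injective R _, locMapAway_surjective R _ fun s => ?_⟩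
  simpa [mul_assoc] using hf (g * s)

lemma cechCompareMap_cechHom (f g : ↥R) (p : Localization.Away f × Localization.Away g) :
    cechCompareMap R f g (cechHom f g p)
      = cechHom (f : S) (g : S) (Prod.map (locMapAway R f) (locMapAway R g) p) := by
  simp only [cechHom, AddMonoidHom.sub_apply, AddMonoidHom.comp_apply, AddMonoidHom.coe_fst,
    AddMonoidHom.coe_snd, RingHom.toAddMonoidHom_eq_coe, AddMonoidHom.coe_coe, map_sub,
    Prod.map_fst, Prod.map_snd, ← RingHom.comp_apply, cechCompare_comp_left,
    cechCompare_comp_right]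

/-- Let `R ⊆ S` be an extension of commutative rings and `f, g ∈ R` with
`f·S ⊆ R` and `g·S ⊆ R` (i.e. `f` and `g` lie in the conductor).  Then the natural map
`H²_{f,g}(R) → H²_{f,g}(S)` between the cokernels of the Čech maps
`R_f ⊕ R_g → R_{fg}` and `S_f ⊕ S_g → S_{fg}` is an isomorphism. -/
theorem cechCokerMap_bijective {S : Type*} [CommRing S] (R : Subring S) (f g : ↥R)
    (hf : ∀ s : S, (f : S) * s ∈ R) (hg : ∀ s : S, (g : S) * s ∈ R) :
    Function.Bijective (cechCokerMap R f g) :=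
  QuotientAddGroup.map_bijective_of_comm
    ((locMapAway_surjective R f hf).prodMap (locMapAway_surjective R g hg))
    (cechCompareMap_bijective R f g hf) (cechCompareMap_cechHom R f g) _
end

section
/- Let S be a Noetherian unique factorization domain, let f, g be nonzero elements of S, and let d be a greatest common divisor of f and g. Then the top Čech cohomology modules H²_{f,g}(S), H²_{f,g}(S_d), and H²_{f/d, g/d}(S_d) are all isomorphic as S-modules; that is, the cokernel of S_f ⊕ S_g → S_{fg} is isomorphic both to the cokernel of (S_d)_f ⊕ (S_d)_g → (S_d)_{fg} and to the cokernel of (S_d)_{f/d} ⊕ (S_d)_{g/d} → (S_d)_{(f/d)(g/d)}. -/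
/-- The image of the Čech map `δ : B_u ⊕ B_v → B_{u·v}`, `(a,b) ↦ ā - b̄`, as an
`S`-submodule of `B_{u·v}`, where `B` is an `S`-algebra. -/
noncomputable def cechRangeOver (S : Type*) {B : Type*} [CommRing S] [CommRing B]
    [Algebra S B] (u v : B) : Submodule S (Localization.Away (u * v)) where
  carrier := Set.range fun p : Localization.Away u × Localization.Away v =>
    awayLeftMap u v p.1 - awayRightMap u v p.2
  add_mem' := by
    rintro _ _ ⟨p, rfl⟩ ⟨q, rfl⟩
    refine ⟨p + q, ?_⟩
    simp only [Prod.fst_add, Prod.snd_add, map_add]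
    ring
  zero_mem' := ⟨0, by simp⟩
  smul_mem' := by
    rintro s _ ⟨p, rfl⟩
    refine ⟨(algebraMap B (Localization.Away u) (algebraMap S B s) * p.1,
             algebraMap B (Localization.Away v) (algebraMap S B s) * p.2), ?_⟩
    have h1 : awayLeftMap u v (algebraMap B (Localization.Away u) (algebraMap S B s) * p.1)
        = algebraMap B (Localization.Away (u * v)) (algebraMap S B s)
            * awayLeftMap u v p.1 := by
      rw [map_mul]
      congr 1
      simp [awayLeftMap, IsLocalization.Away.awayToAwayRight_eq]
    have h2 : awayRightMap u v (algebraMap B (Localization.Away v) (algebraMap S B s) * p.2)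
        = algebraMap B (Localization.Away (u * v)) (algebraMap S B s)
            * awayRightMap u v p.2 := by
      rw [map_mul]
      congr 1
      simp [awayRightMap, IsLocalization.Away.awayToAwayLeft_eq]
    beta_reduce
    rw [h1, h2, Algebra.smul_def,
      IsScalarTower.algebraMap_apply S B (Localization.Away (u * v))]
    ring

/-- The top Čech cohomology `H²_{u,v}(B)`, the cokernel of the Čech map
`δ : B_u ⊕ B_v → B_{u·v}`, viewed as an `S`-module (where `B` is an `S`-algebra). -/
noncomputable def cechCokerOver (S : Type*) {B : Type*} [CommRing S] [CommRing B]
    [Algebra S B] (u v : B) : Type _ :=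
  Localization.Away (u * v) ⧸ cechRangeOver S u v

noncomputable instance (S : Type*) {B : Type*} [CommRing S] [CommRing B]
    [Algebra S B] (u v : B) : AddCommGroup (cechCokerOver S u v) :=
  inferInstanceAs (AddCommGroup (Localization.Away (u * v) ⧸ cechRangeOver S u v))

noncomputable instance (S : Type*) {B : Type*} [CommRing S] [CommRing B]
    [Algebra S B] (u v : B) : Module S (cechCokerOver S u v) :=
  inferInstanceAs (Module S (Localization.Away (u * v) ⧸ cechRangeOver S u v))


/-- If `T` is a localization of `R` away from `u * d` and `d ∣ u`, then `T` is also a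
localization of `R` away from `u`. -/
lemma away_of_mul_dvd {R T : Type*} [CommRing R] [CommRing T] [Algebra R T] {u d : R}
    (h : d ∣ u) [IsLocalization.Away (u * d) T] : IsLocalization.Away u T := by
  obtain ⟨u', hu'⟩ := h
  have h2 : u ^ 2 = (u * d) * u' := by rw [hu']; ring
  have key : ∀ n : ℕ, u ^ (2 * n) = (u * d) ^ n * u' ^ n := fun n => by
    rw [pow_mul, h2, mul_pow]
  refine IsLocalization.Away.mk u ?_ (fun s => ?_) (fun a b hab => ?_)
  · exact IsLocalization.Away.isUnit_of_dvd (x := u * d) ⟨d, rfl⟩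
  · obtain ⟨n, a, hn⟩ := IsLocalization.Away.surj (u * d) s
    refine ⟨2 * n, a * u' ^ n, ?_⟩
    rw [← map_pow, key, map_mul, map_pow, map_pow, ← mul_assoc, hn, ← map_pow, ← map_mul]
  · obtain ⟨n, hn⟩ := IsLocalization.Away.exists_of_eq (x := u * d) hab
    refine ⟨2 * n, ?_⟩
    calc u ^ (2 * n) * a = u' ^ n * ((u * d) ^ n * a) := by rw [key]; ring
      _ = u' ^ n * ((u * d) ^ n * b) := by rw [hn]
      _ = u ^ (2 * n) * b := by rw [key]; ring

lemma mem_cechRangeOver {S B : Type*} [CommRing S] [CommRing B] [Algebra S B]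
    {u v : B} {x : Localization.Away (u * v)} :
    x ∈ cechRangeOver S u v ↔
      ∃ p : Localization.Away u × Localization.Away v,
        awayLeftMap u v p.1 - awayRightMap u v p.2 = x := Iff.rfl

/-- Transport of the Čech cokernel along compatible equivalences of localizations. -/
noncomputable def cechCokerCongr {S B₁ B₂ : Type*} [CommRing S] [CommRing B₁] [CommRing B₂]
    [Algebra S B₁] [Algebra S B₂] (u₁ v₁ : B₁) (u₂ v₂ : B₂)
    (e : Localization.Away (u₁ * v₁) ≃ₗ[S] Localization.Away (u₂ * v₂))
    (eL : Localization.Away u₁ ≃ Localization.Away u₂)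
    (eR : Localization.Away v₁ ≃ Localization.Away v₂)
    (hL : ∀ a, e (awayLeftMap u₁ v₁ a) = awayLeftMap u₂ v₂ (eL a))
    (hR : ∀ b, e (awayRightMap u₁ v₁ b) = awayRightMap u₂ v₂ (eR b)) :
    cechCokerOver S u₁ v₁ ≃ₗ[S] cechCokerOver S u₂ v₂ :=
  Submodule.Quotient.equiv (cechRangeOver S u₁ v₁) (cechRangeOver S u₂ v₂) e (by
    apply le_antisymm
    · rintro x hx
      obtain ⟨y, hy, rfl⟩ := Submodule.mem_map.mp hx
      obtain ⟨p, rfl⟩ := mem_cechRangeOver.mp hy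
      exact mem_cechRangeOver.mpr ⟨(eL p.1, eR p.2), by rw [← hL, ← hR, ← map_sub]; rfl⟩
    · rintro x hx
      obtain ⟨p, rfl⟩ := mem_cechRangeOver.mp hx
      refine Submodule.mem_map.mpr
        ⟨awayLeftMap u₁ v₁ (eL.symm p.1) - awayRightMap u₁ v₁ (eR.symm p.2),
          mem_cechRangeOver.mpr ⟨(eL.symm p.1, eR.symm p.2), rfl⟩, ?_⟩
      rw [map_sub, LinearEquiv.coe_coe, hL, hR, Equiv.apply_symm_apply, Equiv.apply_symm_apply])

/-- Let `S` be a Noetherian UFD, `f, g` nonzero elements of `S`, and `d`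
a greatest common divisor of `f` and `g` (say `f = d·f'`, `g = d·g'`).  Then the top Čech
cohomology modules `H²_{f,g}(S)`, `H²_{f,g}(S_d)` and `H²_{f',g'}(S_d)` — the cokernels of
the corresponding Čech maps — are all isomorphic as `S`-modules. -/
theorem cechCoker_isomorphisms_of_gcd (S : Type*) [CommRing S] [IsDomain S]
    [IsNoetherianRing S] [UniqueFactorizationMonoid S]
    (f g d f' g' : S) (hf : f ≠ 0) (hg : g ≠ 0)
    (hdf : f = d * f') (hdg : g = d * g')
    (hgcd : ∀ e : S, e ∣ f → e ∣ g → e ∣ d) :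
    Nonempty (cechCokerOver S f g ≃ₗ[S]
        cechCokerOver S (algebraMap S (Localization.Away d) f)
          (algebraMap S (Localization.Away d) g)) ∧
    Nonempty (cechCokerOver S f g ≃ₗ[S]
        cechCokerOver S (algebraMap S (Localization.Away d) f')
          (algebraMap S (Localization.Away d) g')) := by
  classical
  have hdvd_f : d ∣ f := ⟨f', hdf⟩
  have hdvd_g : d ∣ g := ⟨g', hdg⟩
  have hdvd_fg : d ∣ f * g := hdvd_f.mul_right g
  set B := Localization.Away d with hBdef
  -- Part 1: localizations of `S` away from `f`, `g`, `f*g` agree with those of `B`.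
  haveI iF : IsLocalization.Away f (Localization.Away (algebraMap S B f)) :=
    away_of_mul_dvd hdvd_f
  haveI iG : IsLocalization.Away g (Localization.Away (algebraMap S B g)) :=
    away_of_mul_dvd hdvd_g
  haveI iFGmul : IsLocalization.Away ((f * g) * d)
      (Localization.Away (algebraMap S B f * algebraMap S B g)) := by
    rw [← map_mul]; infer_instance
  haveI iFG : IsLocalization.Away (f * g)
      (Localization.Away (algebraMap S B f * algebraMap S B g)) :=
    away_of_mul_dvd hdvd_fg
  let eL₁ : Localization.Away f ≃ₐ[S] Localization.Away (algebraMap S B f) :=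
    IsLocalization.algEquiv (Submonoid.powers f) _ _
  let eR₁ : Localization.Away g ≃ₐ[S] Localization.Away (algebraMap S B g) :=
    IsLocalization.algEquiv (Submonoid.powers g) _ _
  let e₁ : Localization.Away (f * g) ≃ₐ[S]
      Localization.Away (algebraMap S B f * algebraMap S B g) :=
    IsLocalization.algEquiv (Submonoid.powers (f * g)) _ _
  have hL₁ : ∀ a, e₁ (awayLeftMap f g a)
      = awayLeftMap (algebraMap S B f) (algebraMap S B g) (eL₁ a) := by
    have h : (e₁.toAlgHom.toRingHom).comp (awayLeftMap f g)
        = (awayLeftMap (algebraMap S B f) (algebraMap S B g)).comp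
            eL₁.toAlgHom.toRingHom := by
      apply IsLocalization.ringHom_ext (Submonoid.powers f)
      ext a
      simp only [RingHom.comp_apply, RingHom.coe_comp, Function.comp_apply,
        AlgHom.toRingHom_eq_coe, AlgEquiv.toAlgHom_eq_coe, RingHom.coe_coe, AlgHom.coe_coe]
      rw [show awayLeftMap f g (algebraMap S (Localization.Away f) a)
            = algebraMap S (Localization.Away (f * g)) a from
          IsLocalization.Away.awayToAwayRight_eq f g a]
      simp only [AlgEquiv.coe_algHom, AlgEquiv.commutes]
      rw [IsScalarTower.algebraMap_apply S B (Localization.Away (algebraMap S B f)),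
        show awayLeftMap (algebraMap S B f) (algebraMap S B g)
            (algebraMap B (Localization.Away (algebraMap S B f)) (algebraMap S B a))
            = algebraMap B _ (algebraMap S B a) from
          IsLocalization.Away.awayToAwayRight_eq _ _ _,
        ← IsScalarTower.algebraMap_apply]
    exact fun a => RingHom.congr_fun h a
  have hR₁ : ∀ b, e₁ (awayRightMap f g b)
      = awayRightMap (algebraMap S B f) (algebraMap S B g) (eR₁ b) := by
    have h : (e₁.toAlgHom.toRingHom).comp (awayRightMap f g)
        = (awayRightMap (algebraMap S B f) (algebraMap S B g)).comp
            eR₁.toAlgHom.toRingHom := by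
      apply IsLocalization.ringHom_ext (Submonoid.powers g)
      ext b
      simp only [RingHom.comp_apply, RingHom.coe_comp, Function.comp_apply,
        AlgHom.toRingHom_eq_coe, AlgEquiv.toAlgHom_eq_coe, RingHom.coe_coe, AlgHom.coe_coe]
      rw [show awayRightMap f g (algebraMap S (Localization.Away g) b)
            = algebraMap S (Localization.Away (f * g)) b from
          IsLocalization.Away.awayToAwayLeft_eq g f b]
      simp only [AlgEquiv.coe_algHom, AlgEquiv.commutes]
      rw [IsScalarTower.algebraMap_apply S B (Localization.Away (algebraMap S B g)),
        show awayRightMap (algebraMap S B f) (algebraMap S B g)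
            (algebraMap B (Localization.Away (algebraMap S B g)) (algebraMap S B b))
            = algebraMap B _ (algebraMap S B b) from
          IsLocalization.Away.awayToAwayLeft_eq _ _ _,
        ← IsScalarTower.algebraMap_apply]
    exact fun b => RingHom.congr_fun h b
  let first : cechCokerOver S f g ≃ₗ[S]
      cechCokerOver S (algebraMap S B f) (algebraMap S B g) :=
    cechCokerCongr f g (algebraMap S B f) (algebraMap S B g)
      e₁.toLinearEquiv eL₁.toEquiv eR₁.toEquiv hL₁ hR₁
  -- Part 2: inside `B`, `f` and `f'` are associated, likewise `g` and `g'`.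
  have hdu : IsUnit (algebraMap S B d) := IsLocalization.Away.algebraMap_isUnit d
  have haf : Associated (algebraMap S B f') (algebraMap S B f) := by
    refine ⟨hdu.unit, ?_⟩
    rw [IsUnit.unit_spec, ← map_mul]
    congr 1
    rw [hdf]; ring
  have hag : Associated (algebraMap S B g') (algebraMap S B g) := by
    refine ⟨hdu.unit, ?_⟩
    rw [IsUnit.unit_spec, ← map_mul]
    congr 1
    rw [hdg]; ring
  have hafg : Associated (algebraMap S B f' * algebraMap S B g')
      (algebraMap S B f * algebraMap S B g) := haf.mul_mul hag
  haveI jF : IsLocalization.Away (algebraMap S B f)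
      (Localization.Away (algebraMap S B f')) := IsLocalization.Away.of_associated haf
  haveI jG : IsLocalization.Away (algebraMap S B g)
      (Localization.Away (algebraMap S B g')) := IsLocalization.Away.of_associated hag
  haveI jFG : IsLocalization.Away (algebraMap S B f * algebraMap S B g)
      (Localization.Away (algebraMap S B f' * algebraMap S B g')) :=
    IsLocalization.Away.of_associated hafg
  let eL₂ : Localization.Away (algebraMap S B f) ≃ₐ[B]
      Localization.Away (algebraMap S B f') :=
    IsLocalization.algEquiv (Submonoid.powers (algebraMap S B f)) _ _
  let eR₂ : Localization.Away (algebraMap S B g) ≃ₐ[B]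
      Localization.Away (algebraMap S B g') :=
    IsLocalization.algEquiv (Submonoid.powers (algebraMap S B g)) _ _
  let e₂ : Localization.Away (algebraMap S B f * algebraMap S B g) ≃ₐ[B]
      Localization.Away (algebraMap S B f' * algebraMap S B g') :=
    IsLocalization.algEquiv (Submonoid.powers (algebraMap S B f * algebraMap S B g)) _ _
  have hL₂ : ∀ a, e₂ (awayLeftMap (algebraMap S B f) (algebraMap S B g) a)
      = awayLeftMap (algebraMap S B f') (algebraMap S B g') (eL₂ a) := by
    have h : (e₂.toAlgHom.toRingHom).comp
          (awayLeftMap (algebraMap S B f) (algebraMap S B g))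
        = (awayLeftMap (algebraMap S B f') (algebraMap S B g')).comp
            eL₂.toAlgHom.toRingHom := by
      apply IsLocalization.ringHom_ext (Submonoid.powers (algebraMap S B f))
      ext b
      simp only [RingHom.comp_apply, RingHom.coe_comp, Function.comp_apply,
        AlgHom.toRingHom_eq_coe, AlgEquiv.toAlgHom_eq_coe, RingHom.coe_coe, AlgHom.coe_coe]
      rw [show awayLeftMap (algebraMap S B f) (algebraMap S B g)
            (algebraMap B (Localization.Away (algebraMap S B f)) b)
            = algebraMap B _ b from IsLocalization.Away.awayToAwayRight_eq _ _ _]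
      simp only [AlgEquiv.coe_algHom, AlgEquiv.commutes]
      rw [show awayLeftMap (algebraMap S B f') (algebraMap S B g')
            (algebraMap B (Localization.Away (algebraMap S B f')) b)
            = algebraMap B _ b from IsLocalization.Away.awayToAwayRight_eq _ _ _]
    exact fun a => RingHom.congr_fun h a
  have hR₂ : ∀ b, e₂ (awayRightMap (algebraMap S B f) (algebraMap S B g) b)
      = awayRightMap (algebraMap S B f') (algebraMap S B g') (eR₂ b) := by
    have h : (e₂.toAlgHom.toRingHom).comp
          (awayRightMap (algebraMap S B f) (algebraMap S B g))
        = (awayRightMap (algebraMap S B f') (algebraMap S B g')).comp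
            eR₂.toAlgHom.toRingHom := by
      apply IsLocalization.ringHom_ext (Submonoid.powers (algebraMap S B g))
      ext b
      simp only [RingHom.comp_apply, RingHom.coe_comp, Function.comp_apply,
        AlgHom.toRingHom_eq_coe, AlgEquiv.toAlgHom_eq_coe, RingHom.coe_coe, AlgHom.coe_coe]
      rw [show awayRightMap (algebraMap S B f) (algebraMap S B g)
            (algebraMap B (Localization.Away (algebraMap S B g)) b)
            = algebraMap B _ b from IsLocalization.Away.awayToAwayLeft_eq _ _ _]
      simp only [AlgEquiv.coe_algHom, AlgEquiv.commutes]
      rw [show awayRightMap (algebraMap S B f') (algebraMap S B g')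
            (algebraMap B (Localization.Away (algebraMap S B g')) b)
            = algebraMap B _ b from IsLocalization.Away.awayToAwayLeft_eq _ _ _]
    exact fun b => RingHom.congr_fun h b
  let second : cechCokerOver S (algebraMap S B f) (algebraMap S B g) ≃ₗ[S]
      cechCokerOver S (algebraMap S B f') (algebraMap S B g') :=
    cechCokerCongr (algebraMap S B f) (algebraMap S B g)
      (algebraMap S B f') (algebraMap S B g')
      (e₂.toLinearEquiv.restrictScalars S) eL₂.toEquiv eR₂.toEquiv hL₂ hR₂
  exact ⟨⟨first⟩, ⟨first.trans second⟩⟩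
end

section
/- Let S be a Noetherian unique factorization domain, let f, g be nonzero elements of S, and let d be a greatest common divisor of f and g. Then the following are equivalent: (a) the Čech map S_f ⊕ S_g → S_{fg}, (a,b) ↦ ā − b̄, is surjective (i.e. H²_{f,g}(S) = 0); (b) either there exists z ∈ S with √(zS) = √((f/d, g/d)S) (i.e. the arithmetic rank of (f/d, g/d)S is at most 1), or d lies in the radical of the ideal (f/d, g/d)S; (c) there exists a positive integer n such that (fg)ⁿ ∈ (f^{n+1}, g^{n+1})S. -/
section Aux

variable {S : Type*} [CommRing S]

lemma awayLeftMap_algebraMap (u v a : S) :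
    awayLeftMap u v (algebraMap S (Localization.Away u) a)
      = algebraMap S (Localization.Away (u * v)) a :=
  IsLocalization.Away.awayToAwayRight_eq u v a

lemma awayRightMap_algebraMap (u v a : S) :
    awayRightMap u v (algebraMap S (Localization.Away v) a)
      = algebraMap S (Localization.Away (u * v)) a :=
  IsLocalization.Away.awayToAwayLeft_eq v u a

lemma awayLeftMap_mk' (u v a : S) (E : ℕ) :
    awayLeftMap u v (IsLocalization.mk' (Localization.Away u) a
      (⟨u ^ E, E, rfl⟩ : Submonoid.powers u))
      * algebraMap S (Localization.Away (u * v)) (u ^ E)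
      = algebraMap S (Localization.Away (u * v)) a := by
  have h0 := congrArg (awayLeftMap u v)
    (IsLocalization.mk'_spec (Localization.Away u) a (⟨u ^ E, E, rfl⟩ : Submonoid.powers u))
  rw [map_mul, awayLeftMap_algebraMap, awayLeftMap_algebraMap] at h0
  exact h0

lemma awayRightMap_mk' (u v a : S) (E : ℕ) :
    awayRightMap u v (IsLocalization.mk' (Localization.Away v) a
      (⟨v ^ E, E, rfl⟩ : Submonoid.powers v))
      * algebraMap S (Localization.Away (u * v)) (v ^ E)
      = algebraMap S (Localization.Away (u * v)) a := by
  have h0 := congrArg (awayRightMap u v)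
    (IsLocalization.mk'_spec (Localization.Away v) a (⟨v ^ E, E, rfl⟩ : Submonoid.powers v))
  rw [map_mul, awayRightMap_algebraMap, awayRightMap_algebraMap] at h0
  exact h0

/-- If `r ∈ (x, y)` then `r ^ (m + n) ∈ (x ^ m, y ^ n)`. -/
lemma pow_mem_span_pow {x y r : S} (h : r ∈ Ideal.span {x, y}) (m n : ℕ) :
    r ^ (m + n) ∈ Ideal.span {x ^ m, y ^ n} := by
  obtain ⟨u, v, huv⟩ := Ideal.mem_span_pair.mp h
  rw [← huv, add_pow]
  refine Ideal.sum_mem _ fun i hi => ?_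
  have hi' : i ≤ m + n := by
    have := Finset.mem_range.mp hi; omega
  rcases le_or_gt m i with hmi | hmi
  · have h1 : x ^ m ∣ (u * x) ^ i :=
      (pow_dvd_pow x hmi).trans (by rw [mul_pow]; exact dvd_mul_left _ _)
    have h2 : x ^ m ∣ (u * x) ^ i * (v * y) ^ (m + n - i) * ((m + n).choose i : S) :=
      (h1.mul_right _).mul_right _
    exact Ideal.span_mono (Set.singleton_subset_iff.mpr (Set.mem_insert _ _))
      (Ideal.mem_span_singleton.mpr h2)
  · have h1 : y ^ n ∣ (v * y) ^ (m + n - i) :=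
      (pow_dvd_pow y (show n ≤ m + n - i by omega)).trans
        (by rw [mul_pow]; exact dvd_mul_left _ _)
    have h2 : y ^ n ∣ (u * x) ^ i * (v * y) ^ (m + n - i) * ((m + n).choose i : S) :=
      (h1.mul_left _).mul_right _
    exact Ideal.span_mono (Set.singleton_subset_iff.mpr (by simp))
      (Ideal.mem_span_singleton.mpr h2)

variable [IsDomain S]

/-- If there are relations with arbitrarily large gaps, the Čech map is surjective. -/
lemma surj_of_gaps (f g : S) (hf : f ≠ 0) (hg : g ≠ 0)
    (H : ∀ m : ℕ, 0 < m → ∃ N : ℕ, ∃ a b : S,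
      (f * g) ^ N = a * f ^ (N + m) + b * g ^ (N + m)) :
    Function.Surjective (fun p : Localization.Away f × Localization.Away g =>
      awayLeftMap f g p.1 - awayRightMap f g p.2) := by
  intro x
  suffices h : ∃ (p1 : Localization.Away f) (p2 : Localization.Away g),
      awayLeftMap f g p1 - awayRightMap f g p2 = x by
    obtain ⟨p1, p2, hh⟩ := h
    exact ⟨(p1, p2), hh⟩
  obtain ⟨⟨s, t⟩, hst⟩ := IsLocalization.mk'_surjective (M := Submonoid.powers (f * g)) x
  obtain ⟨m, hm⟩ := t.2
  have hm2 : (f * g) ^ m = (t : S) := hm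
  have hxm : x * algebraMap S (Localization.Away (f * g)) ((f * g) ^ m)
      = algebraMap S (Localization.Away (f * g)) s := by
    rw [hm2, ← hst]; exact IsLocalization.mk'_spec _ s t
  rcases Nat.eq_zero_or_pos m with rfl | hm0
  · refine ⟨algebraMap S (Localization.Away f) s, 0, ?_⟩
    rw [awayLeftMap_algebraMap, map_zero, sub_zero]
    rw [pow_zero, map_one, mul_one] at hxm
    exact hxm.symm
  obtain ⟨N, a, b, hab⟩ := H m hm0
  refine ⟨IsLocalization.mk' (Localization.Away f) (s * b)
      (⟨f ^ (N + m), N + m, rfl⟩ : Submonoid.powers f),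
    IsLocalization.mk' (Localization.Away g) (-(s * a))
      (⟨g ^ (N + m), N + m, rfl⟩ : Submonoid.powers g), ?_⟩
  set P1 : Localization.Away f := IsLocalization.mk' (Localization.Away f) (s * b)
      (⟨f ^ (N + m), N + m, rfl⟩ : Submonoid.powers f) with hP1
  set P2 : Localization.Away g := IsLocalization.mk' (Localization.Away g) (-(s * a))
      (⟨g ^ (N + m), N + m, rfl⟩ : Submonoid.powers g) with hP2
  have hunit : IsUnit (algebraMap S (Localization.Away (f * g)) ((f * g) ^ (N + m))) :=
    IsLocalization.map_units (Localization.Away (f * g))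
      (⟨(f * g) ^ (N + m), N + m, rfl⟩ : Submonoid.powers (f * g))
  apply hunit.mul_right_cancel
  have hL : awayLeftMap f g P1 * algebraMap S (Localization.Away (f * g)) (f ^ (N + m))
      = algebraMap S (Localization.Away (f * g)) (s * b) := awayLeftMap_mk' f g (s * b) (N + m)
  have hR : awayRightMap f g P2 * algebraMap S (Localization.Away (f * g)) (g ^ (N + m))
      = algebraMap S (Localization.Away (f * g)) (-(s * a)) :=
    awayRightMap_mk' f g (-(s * a)) (N + m)
  have e1 : algebraMap S (Localization.Away (f * g)) ((f * g) ^ (N + m))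
      = algebraMap S (Localization.Away (f * g)) (f ^ (N + m))
        * algebraMap S (Localization.Away (f * g)) (g ^ (N + m)) := by
    rw [← map_mul, ← mul_pow]
  have e2 : algebraMap S (Localization.Away (f * g)) (s * b)
        * algebraMap S (Localization.Away (f * g)) (g ^ (N + m))
      = algebraMap S (Localization.Away (f * g)) (s * b * g ^ (N + m)) := (map_mul _ _ _).symm
  have e3 : algebraMap S (Localization.Away (f * g)) (-(s * a))
        * algebraMap S (Localization.Away (f * g)) (f ^ (N + m))
      = algebraMap S (Localization.Away (f * g)) (-(s * a) * f ^ (N + m)) := (map_mul _ _ _).symm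
  have e4 : algebraMap S (Localization.Away (f * g)) (s * b * g ^ (N + m))
        - algebraMap S (Localization.Away (f * g)) (-(s * a) * f ^ (N + m))
      = algebraMap S (Localization.Away (f * g)) (s * (f * g) ^ N) := by
    rw [← map_sub]
    exact congrArg _ (by linear_combination (-s) * hab)
  have hr : x * algebraMap S (Localization.Away (f * g)) ((f * g) ^ (N + m))
      = algebraMap S (Localization.Away (f * g)) (s * (f * g) ^ N) := by
    have hy : ((f * g) ^ (N + m) : S) = (f * g) ^ m * (f * g) ^ N := by
      rw [← pow_add]; ring_nf
    rw [hy, map_mul, ← mul_assoc, hxm, ← map_mul]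
  linear_combination (awayLeftMap f g P1 - awayRightMap f g P2) * e1
    + algebraMap S (Localization.Away (f * g)) (g ^ (N + m)) * hL
    - algebraMap S (Localization.Away (f * g)) (f ^ (N + m)) * hR
    + e2 - e3 + e4 - hr

/-- Surjectivity of the Čech map gives the gap-one relation. -/
lemma gap_of_surj (f g : S) (hf : f ≠ 0) (hg : g ≠ 0)
    (hs : Function.Surjective (fun p : Localization.Away f × Localization.Away g =>
      awayLeftMap f g p.1 - awayRightMap f g p.2)) :
    ∃ n : ℕ, 0 < n ∧ (f * g) ^ n ∈ Ideal.span {f ^ (n + 1), g ^ (n + 1)} := by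
  obtain ⟨⟨p1, p2⟩, hw⟩ := hs (IsLocalization.mk' (Localization.Away (f * g)) 1
    (⟨f * g, 1, pow_one _⟩ : Submonoid.powers (f * g)))
  simp only at hw
  obtain ⟨⟨a, ta⟩, ha⟩ := IsLocalization.mk'_surjective (M := Submonoid.powers f) p1
  obtain ⟨p, hp⟩ := ta.2
  have hp2 : f ^ p = (ta : S) := hp
  have hta : (⟨f ^ p, p, rfl⟩ : Submonoid.powers f) = ta := Subtype.ext hp2
  rw [← hta] at ha
  obtain ⟨⟨b, tb⟩, hb⟩ := IsLocalization.mk'_surjective (M := Submonoid.powers g) p2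
  obtain ⟨q, hq⟩ := tb.2
  have hq2 : g ^ q = (tb : S) := hq
  have htb : (⟨g ^ q, q, rfl⟩ : Submonoid.powers g) = tb := Subtype.ext hq2
  rw [← htb] at hb
  have h1 : awayLeftMap f g p1 * algebraMap S (Localization.Away (f * g)) (f ^ p)
      = algebraMap S (Localization.Away (f * g)) a := by
    rw [← ha]; exact awayLeftMap_mk' f g a p
  have h2 : awayRightMap f g p2 * algebraMap S (Localization.Away (f * g)) (g ^ q)
      = algebraMap S (Localization.Away (f * g)) b := by
    rw [← hb]; exact awayRightMap_mk' f g b q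
  have h3 : (awayLeftMap f g p1 - awayRightMap f g p2)
      * algebraMap S (Localization.Away (f * g)) (f * g) = 1 := by
    rw [hw]
    have h0 := IsLocalization.mk'_spec (Localization.Away (f * g)) 1
      (⟨f * g, 1, pow_one _⟩ : Submonoid.powers (f * g))
    rw [map_one] at h0
    exact h0
  have hinj : Function.Injective (algebraMap S (Localization.Away (f * g))) :=
    IsLocalization.injective _
      (powers_le_nonZeroDivisors_of_noZeroDivisors (mul_ne_zero hf hg))
  have hS : f ^ p * g ^ q = a * g ^ q * (f * g) - b * f ^ p * (f * g) := by
    apply hinj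
    calc algebraMap S (Localization.Away (f * g)) (f ^ p * g ^ q)
        = (awayLeftMap f g p1 - awayRightMap f g p2)
            * algebraMap S (Localization.Away (f * g)) (f * g)
            * algebraMap S (Localization.Away (f * g)) (f ^ p * g ^ q) := by
          rw [h3, one_mul]
      _ = (awayLeftMap f g p1 * algebraMap S (Localization.Away (f * g)) (f ^ p))
            * (algebraMap S (Localization.Away (f * g)) (g ^ q)
              * algebraMap S (Localization.Away (f * g)) (f * g))
          - (awayRightMap f g p2 * algebraMap S (Localization.Away (f * g)) (g ^ q))
            * (algebraMap S (Localization.Away (f * g)) (f ^ p)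
              * algebraMap S (Localization.Away (f * g)) (f * g)) := by
          simp only [map_mul]; ring
      _ = algebraMap S (Localization.Away (f * g)) a
            * (algebraMap S (Localization.Away (f * g)) (g ^ q)
              * algebraMap S (Localization.Away (f * g)) (f * g))
          - algebraMap S (Localization.Away (f * g)) b
            * (algebraMap S (Localization.Away (f * g)) (f ^ p)
              * algebraMap S (Localization.Away (f * g)) (f * g)) := by
          rw [h1, h2]
      _ = algebraMap S (Localization.Away (f * g))
            (a * g ^ q * (f * g) - b * f ^ p * (f * g)) := by
          simp only [map_sub, map_mul]; ring
  set N := max (max p q) 1 with hN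
  have hpN : p ≤ N := le_trans (le_max_left p q) (le_max_left _ 1)
  have hqN : q ≤ N := le_trans (le_max_right p q) (le_max_left _ 1)
  have hN1 : 1 ≤ N := le_max_right _ 1
  obtain ⟨i, hi⟩ : ∃ i, N = p + i := ⟨N - p, by omega⟩
  obtain ⟨j, hj⟩ : ∃ j, N = q + j := ⟨N - q, by omega⟩
  refine ⟨N, by omega, Ideal.mem_span_pair.mpr ⟨-(b * g ^ j * g), a * f ^ i * f, ?_⟩⟩
  have e1 : (f * g) ^ N = (f ^ p * g ^ q) * (f ^ i * g ^ j) := by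
    rw [mul_pow, show f ^ N = f ^ p * f ^ i by rw [hi, pow_add],
      show g ^ N = g ^ q * g ^ j by rw [hj, pow_add]]
    ring
  have e2 : f ^ (N + 1) = f ^ p * f ^ i * f := by rw [hi]; ring
  have e3 : g ^ (N + 1) = g ^ q * g ^ j * g := by rw [hj]; ring
  rw [e1, e2, e3, hS]
  ring

end Aux

section UFD

variable {S : Type*} [CommRing S] [IsDomain S] [UniqueFactorizationMonoid S]

/-- From the gap-one relation, `d` is in the radical of `(f', g')`. -/
lemma rad_of_gap {f g d f' g' : S} (hrel : IsRelPrime f' g') (hd : d ≠ 0) (hg' : g' ≠ 0)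
    (hdf : f = d * f') (hdg : g = d * g') {n : ℕ} (hn : 0 < n)
    (hmem : (f * g) ^ n ∈ Ideal.span {f ^ (n + 1), g ^ (n + 1)}) :
    d ∈ (Ideal.span {f', g'}).radical := by
  obtain ⟨n', rfl⟩ : ∃ n', n = n' + 1 := ⟨n - 1, by omega⟩
  obtain ⟨a, b, hab⟩ := Ideal.mem_span_pair.mp hmem
  subst hdf hdg
  have key : a * f' ^ (n' + 2) + b * g' ^ (n' + 2)
      = d ^ n' * f' ^ (n' + 1) * g' ^ (n' + 1) := by
    apply mul_left_cancel₀ (pow_ne_zero (n' + 2) hd)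
    linear_combination hab
  have hdvd1 : g' ^ (n' + 1) ∣ a * f' ^ (n' + 2) :=
    ⟨d ^ n' * f' ^ (n' + 1) - b * g', by linear_combination key⟩
  have ha1 : g' ^ (n' + 1) ∣ a := (hrel.symm.pow).dvd_of_dvd_mul_right hdvd1
  obtain ⟨a₁, rfl⟩ := ha1
  have key2 : a₁ * f' ^ (n' + 2) + b * g' = d ^ n' * f' ^ (n' + 1) := by
    apply mul_left_cancel₀ (pow_ne_zero (n' + 1) hg')
    linear_combination key
  have hdvd2 : g' ∣ f' ^ (n' + 1) * (d ^ n' - a₁ * f') :=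
    ⟨b, by linear_combination -key2⟩
  obtain ⟨c, hc⟩ := (hrel.symm.pow_right).dvd_of_dvd_mul_left hdvd2
  exact ⟨n', Ideal.mem_span_pair.mpr ⟨a₁, c, by linear_combination -hc⟩⟩

/-- From `d` in the radical of `(f', g')`, relations with arbitrarily large gaps follow. -/
lemma gaps_of_rad {f g d f' g' : S} (hdf : f = d * f') (hdg : g = d * g')
    (hd : d ∈ (Ideal.span {f', g'}).radical) :
    ∀ m : ℕ, 0 < m → ∃ N : ℕ, ∃ a b : S,
      (f * g) ^ N = a * f ^ (N + m) + b * g ^ (N + m) := by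
  obtain ⟨k, hk⟩ := hd
  have hk1 : d ^ (k + 1) ∈ Ideal.span {f', g'} := by
    rw [pow_succ]
    exact Ideal.mul_mem_right d _ hk
  intro m _
  have h2 := pow_mem_span_pow hk1 m m
  obtain ⟨uu, vv, huv⟩ := Ideal.mem_span_pair.mp h2
  have huv' : uu * f' ^ m + vv * g' ^ m = d ^ ((k + 1) * (m + m)) := by
    rw [← pow_mul] at huv; exact huv
  generalize (k + 1) * (m + m) = K at huv'
  refine ⟨K + m, uu * g' ^ (K + m), vv * f' ^ (K + m), ?_⟩
  subst hdf hdg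
  linear_combination (-(d ^ (K + m + m) * f' ^ (K + m) * g' ^ (K + m))) * huv'

/-- Condition (b) implies `d` is in the radical of `(f', g')`. -/
lemma rad_of_b {d f' g' : S} (hrel : IsRelPrime f' g') (hf' : f' ≠ 0)
    (hb : (∃ z : S, (Ideal.span {z}).radical = (Ideal.span {f', g'}).radical) ∨
      d ∈ (Ideal.span {f', g'}).radical) :
    d ∈ (Ideal.span {f', g'}).radical := by
  rcases hb with ⟨z, hz⟩ | h
  swap
  · exact h
  have hf'r : f' ∈ (Ideal.span {z}).radical := by
    rw [hz]
    exact Ideal.le_radical (Ideal.subset_span (by simp))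
  have hg'r : g' ∈ (Ideal.span {z}).radical := by
    rw [hz]
    exact Ideal.le_radical (Ideal.subset_span (by simp))
  obtain ⟨na, haz⟩ := hf'r
  obtain ⟨nb, hbz⟩ := hg'r
  rw [Ideal.mem_span_singleton] at haz hbz
  have hzu : IsUnit z := by
    by_contra hzu
    have hz0 : z ≠ 0 := by
      rintro rfl
      exact pow_ne_zero na hf' (zero_dvd_iff.mp haz)
    obtain ⟨pp, hppirr, hppz⟩ := WfDvdMonoid.exists_irreducible_factor hzu hz0
    have hpp : Prime pp := UniqueFactorizationMonoid.irreducible_iff_prime.mp hppirr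
    exact hpp.not_unit
      (hrel (hpp.dvd_of_dvd_pow (hppz.trans haz)) (hpp.dvd_of_dvd_pow (hppz.trans hbz)))
  have htop : (Ideal.span {f', g'} : Ideal S).radical = ⊤ := by
    rw [← hz, Ideal.span_singleton_eq_top.mpr hzu, Ideal.radical_top]
  rw [htop]
  trivial

end UFD

/-- Let `S` be a Noetherian UFD, `f, g` nonzero elements, `d` a gcd of
`f` and `g`, with `f = d·f'` and `g = d·g'`.  The following are equivalent:
(a) the Čech map `S_f ⊕ S_g → S_{fg}`, `(a,b) ↦ ā - b̄`, is surjective (`H²_{f,g}(S) = 0`);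
(b) the arithmetic rank of `(f', g')S` is at most `1`, or `d` lies in the radical of
`(f', g')S`;
(c) `(fg)ⁿ ∈ (f^{n+1}, g^{n+1})S` for some positive integer `n`. -/
theorem cech_vanishing_tfae (S : Type*) [CommRing S] [IsDomain S]
    [IsNoetherianRing S] [UniqueFactorizationMonoid S]
    (f g d f' g' : S) (hf : f ≠ 0) (hg : g ≠ 0)
    (hdf : f = d * f') (hdg : g = d * g')
    (hgcd : ∀ e : S, e ∣ f → e ∣ g → e ∣ d) :
    (Function.Surjective
        (fun p : Localization.Away f × Localization.Away g =>
          awayLeftMap f g p.1 - awayRightMap f g p.2) ↔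
      ((∃ z : S, (Ideal.span {z}).radical = (Ideal.span {f', g'}).radical) ∨
        d ∈ (Ideal.span {f', g'}).radical)) ∧
    (Function.Surjective
        (fun p : Localization.Away f × Localization.Away g =>
          awayLeftMap f g p.1 - awayRightMap f g p.2) ↔
      (∃ n : ℕ, 0 < n ∧ (f * g) ^ n ∈ Ideal.span {f ^ (n + 1), g ^ (n + 1)})) := by
  have hd0 : d ≠ 0 := fun h => hf (by rw [hdf, h, zero_mul])
  have hf' : f' ≠ 0 := fun h => hf (by rw [hdf, h, mul_zero])
  have hg' : g' ≠ 0 := fun h => hg (by rw [hdg, h, mul_zero])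
  have hrel : IsRelPrime f' g' := by
    intro e hef heg
    obtain ⟨cf, hcf⟩ := hef
    obtain ⟨cg, hcg⟩ := heg
    obtain ⟨c, hc⟩ := hgcd (d * e) ⟨cf, by rw [hdf, hcf]; ring⟩ ⟨cg, by rw [hdg, hcg]; ring⟩
    exact IsUnit.of_mul_eq_one c (mul_left_cancel₀ hd0 (by linear_combination -hc))
  have hac : Function.Surjective
      (fun p : Localization.Away f × Localization.Away g =>
        awayLeftMap f g p.1 - awayRightMap f g p.2) →
      ∃ n : ℕ, 0 < n ∧ (f * g) ^ n ∈ Ideal.span {f ^ (n + 1), g ^ (n + 1)} :=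
    gap_of_surj f g hf hg
  have hcr : (∃ n : ℕ, 0 < n ∧ (f * g) ^ n ∈ Ideal.span {f ^ (n + 1), g ^ (n + 1)}) →
      d ∈ (Ideal.span {f', g'}).radical := by
    rintro ⟨n, hn, hmem⟩
    exact rad_of_gap hrel hd0 hg' hdf hdg hn hmem
  have hra : d ∈ (Ideal.span {f', g'}).radical →
      Function.Surjective
        (fun p : Localization.Away f × Localization.Away g =>
          awayLeftMap f g p.1 - awayRightMap f g p.2) :=
    fun h => surj_of_gaps f g hf hg (gaps_of_rad hdf hdg h)
  refine ⟨⟨fun hs => Or.inr (hcr (hac hs)), fun hb => hra (rad_of_b hrel hf' hb)⟩,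
    ⟨hac, fun hc => hra (hcr hc)⟩⟩
end

section
/- Let k be a field, let S be an integral domain that is a k-algebra, and let f be a nonzero element of S with fS ≠ S. Set R = k + fS. Then the radical of the principal ideal fR of R equals the ideal fS of R; in particular, fS is the unique prime ideal of R containing f. (This follows since (fS)·(fS) ⊆ fR ⊆ fS and fS is a maximal ideal of R.) -/
set_option synthInstance.maxHeartbeats 1000000 in
set_option maxHeartbeats 2000000 in
/-- Let `k` be a field, `S` a domain which is a `k`-algebra, and `f` a
nonzero element of `S` with `fS ≠ S`.  Set `R = k + fS`.  Then the radical of the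
principal ideal `fR` of `R` equals the ideal `fS` of `R`; in particular, `fS` is the
unique prime ideal of `R` containing `f`. -/
theorem radical_span_f_eq_comap (k : Type*) [Field k]
    (S : Type*) [CommRing S] [IsDomain S] [Algebra k S]
    (f : S) (hf : f ≠ 0) (hfS : Ideal.span {f} ≠ ⊤) :
    (Ideal.span
        {(⟨f, 0, by rw [map_zero, sub_zero]; exact Ideal.mem_span_singleton_self f⟩ :
          ↥(kPlus k (Ideal.span {f})))}).radical
      = Ideal.comap (kPlus k (Ideal.span {f})).val (Ideal.span {f}) ∧
    ∀ P : Ideal ↥(kPlus k (Ideal.span {f})), P.IsPrime →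
      (⟨f, 0, by rw [map_zero, sub_zero]; exact Ideal.mem_span_singleton_self f⟩ :
        ↥(kPlus k (Ideal.span {f}))) ∈ P →
      P = Ideal.comap (kPlus k (Ideal.span {f})).val (Ideal.span {f}) := by
  classical
  set Q : Ideal S := Ideal.span {f} with hQdef
  set F : ↥(kPlus k Q) :=
    (⟨f, 0, by rw [map_zero, sub_zero]; exact Ideal.mem_span_singleton_self f⟩ :
      ↥(kPlus k Q)) with hF
  set M : Ideal ↥(kPlus k Q) := Ideal.comap (kPlus k Q).val Q with hM
  -- M is maximal
  have hMmax : M.IsMaximal := by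
    rw [Ideal.isMaximal_iff]
    constructor
    · intro h
      have h1 : (1 : S) ∈ Q := h
      exact hfS ((Ideal.eq_top_iff_one Q).mpr h1)
    · intro J x hMJ hxM hxJ
      obtain ⟨c, hc⟩ := x.2
      have hc0 : c ≠ 0 := by
        rintro rfl
        apply hxM
        have : (x : S) - algebraMap k S 0 ∈ Q := hc
        exact (by simpa using this : (x : S) ∈ Q)
      have hmem : x - algebraMap k ↥(kPlus k Q) c ∈ M := by
        show ((x - algebraMap k ↥(kPlus k Q) c : ↥(kPlus k Q)) : S) ∈ Q
        push_cast
        exact hc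
      have halg : algebraMap k ↥(kPlus k Q) c ∈ J := by
        have : algebraMap k ↥(kPlus k Q) c = x - (x - algebraMap k ↥(kPlus k Q) c) := by
          ring
        rw [this]
        exact J.sub_mem hxJ (hMJ hmem)
      have hu : IsUnit (algebraMap k ↥(kPlus k Q) c) :=
        (isUnit_iff_ne_zero.mpr hc0).map (algebraMap k ↥(kPlus k Q))
      exact (Ideal.eq_top_iff_one J).mp (J.eq_top_of_isUnit_mem halg hu)
  have hFM : F ∈ M := by
    show (F : S) ∈ Q
    exact Ideal.mem_span_singleton_self f
  have hrad : (Ideal.span {F}).radical = M := by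
    apply le_antisymm
    · rw [← hMmax.isPrime.radical]
      exact Ideal.radical_mono (Ideal.span_le.mpr (by simpa using hFM))
    · intro x hx
      have hxQ : (x : S) ∈ Q := hx
      obtain ⟨s, hs⟩ := Ideal.mem_span_singleton'.mp hxQ
      have hy : f * (s * (s * f)) - algebraMap k S 0 ∈ Q := by
        rw [map_zero, sub_zero]
        exact Q.mul_mem_right _ (Ideal.mem_span_singleton_self f)
      refine ⟨2, ?_⟩
      refine Ideal.mem_span_singleton.mpr ⟨⟨s * (s * f), 0, by
        rw [map_zero, sub_zero]
        refine Ideal.mul_mem_left _ _ (Ideal.mul_mem_left _ _ ?_)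
        exact Ideal.mem_span_singleton_self f⟩, ?_⟩
      apply Subtype.ext
      push_cast
      show (x : S) ^ 2 = f * (s * (s * f))
      rw [← hs]; ring
  refine ⟨hrad, ?_⟩
  intro P hP hFP
  have hle : M ≤ P := by
    rw [← hrad, ← hP.radical]
    exact Ideal.radical_mono (Ideal.span_le.mpr (by simpa using hFP))
  exact (hMmax.eq_of_le hP.ne_top hle).symm
end
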